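/- arXiv:2501.17025 — 6 statements merged into one kernel-verified Lean document; each statement's English description precedes it below -/
import Mathlib

section
/- For all complex numbers a, b and all real p ≥ 2, Re((|b|^{p-2}b − |a|^{p-2}a)·conj(b−a)) ≥ (|b−a|²/2)·(|a|^{p-2} + |b|^{p-2}) ≥ 0, where when a = 0 or b = 0 the corresponding term |a|^{p-2}a or |b|^{p-2}b is interpreted as 0. -/
/-! With `α = ‖a‖ ^ (p - 2)` and `β = ‖b‖ ^ (p - 2)`, expanding the inner product gives
`re ((β b - α a) · conj (b - a)) = ‖b - a‖² (α + β) / 2 + (β - α) (‖b‖² - ‖a‖²) / 2`.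
The correction term is nonnegative because `t ↦ t ^ (p - 2)` and `t ↦ t²` are both monotone
on `[0, ∞)`. -/

open scoped InnerProductSpace

section InnerProductSpace

variable {E : Type*} [NormedAddCommGroup E] [InnerProductSpace ℝ E]

theorem real_inner_sub_smul_sub_smul (α β : ℝ) (x y : E) :
    ⟪y - x, β • y - α • x⟫_ℝ =
      ‖y - x‖ ^ 2 / 2 * (α + β) + (β - α) * (‖y‖ ^ 2 - ‖x‖ ^ 2) / 2 := by
  simp only [inner_sub_left, inner_sub_right, real_inner_smul_right, real_inner_comm x y,
    real_inner_self_eq_norm_sq, norm_sub_sq_real]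
  ring

theorem le_real_inner_sub_smul_sub_smul {α β : ℝ} {x y : E}
    (h : 0 ≤ (β - α) * (‖y‖ ^ 2 - ‖x‖ ^ 2)) :
    ‖y - x‖ ^ 2 / 2 * (α + β) ≤ ⟪y - x, β • y - α • x⟫_ℝ := by
  rw [real_inner_sub_smul_sub_smul]
  linarith

end InnerProductSpace

theorem Real.rpow_sub_rpow_mul_sq_sub_sq_nonneg {r s t : ℝ} (hr : 0 ≤ r) (hs : 0 ≤ s)
    (ht : 0 ≤ t) : 0 ≤ (t ^ r - s ^ r) * (t ^ 2 - s ^ 2) := by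
  rcases le_total s t with hst | hts
  · exact mul_nonneg (sub_nonneg.2 (Real.rpow_le_rpow hs hst hr))
      (sub_nonneg.2 (pow_le_pow_left₀ hs hst 2))
  · exact mul_nonneg_of_nonpos_of_nonpos (sub_nonpos.2 (Real.rpow_le_rpow ht hts hr))
      (sub_nonpos.2 (pow_le_pow_left₀ ht hts 2))

theorem re_lower_bound (p : ℝ) (hp : 2 ≤ p) (a b : ℂ) :
    (((‖b‖ ^ (p - 2) : ℝ) * b - (‖a‖ ^ (p - 2) : ℝ) * a) *
        (starRingEnd ℂ) (b - a)).re ≥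
      ‖b - a‖ ^ 2 / 2 * (‖a‖ ^ (p - 2) + ‖b‖ ^ (p - 2)) ∧
    ‖b - a‖ ^ 2 / 2 * (‖a‖ ^ (p - 2) + ‖b‖ ^ (p - 2)) ≥ 0 := by
  refine ⟨?_, by positivity⟩
  rw [← Complex.real_smul, ← Complex.real_smul, ← Complex.inner]
  exact le_real_inner_sub_smul_sub_smul <|
    Real.rpow_sub_rpow_mul_sq_sub_sq_nonneg (sub_nonneg.2 hp) (norm_nonneg a) (norm_nonneg b)
end

section
/- For all complex numbers a, b and all real p ≥ 2, one has |b − a|^p ≤ 2^{p−2} · Re((|b|^{p-2}b − |a|^{p-2}a)·conj(b−a)). -/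
lemma rpow_pred_mul_self {x : ℝ} (hx : 0 ≤ x) {q : ℝ} (hq : 0 < q) :
    x ^ (q - 1) * x = x ^ q := by
  rcases eq_or_lt_of_le hx with h | h
  · rw [← h, Real.zero_rpow hq.ne', mul_zero]
  · rw [← Real.rpow_add_one h.ne' (q - 1), sub_add_cancel]

lemma rpow_sub_two_mul_sq {x : ℝ} (hx : 0 ≤ x) {q : ℝ} (hq : q ≠ 0) :
    x ^ (q - 2) * x ^ (2 : ℕ) = x ^ q := by
  rcases eq_or_lt_of_le hx with h | h
  · rw [← h, Real.zero_rpow hq]; norm_num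
  · rw [← Real.rpow_natCast x 2, ← Real.rpow_add h]; norm_num

lemma rpow_superadd {x y q : ℝ} (hx : 0 ≤ x) (hy : 0 ≤ y) (hq : 1 ≤ q) :
    x ^ q + y ^ q ≤ (x + y) ^ q := by
  have hxy : 0 ≤ x + y := by linarith
  have h1 : x ^ q ≤ x * (x + y) ^ (q - 1) := by
    rw [← rpow_pred_mul_self hx (by linarith), mul_comm]
    gcongr
    · linarith
  have h2 : y ^ q ≤ y * (x + y) ^ (q - 1) := by
    rw [← rpow_pred_mul_self hy (by linarith), mul_comm]
    gcongr
    · linarith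
  have h3 : x * (x + y) ^ (q - 1) + y * (x + y) ^ (q - 1) = (x + y) ^ q := by
    rw [← add_mul, mul_comm, rpow_pred_mul_self hxy (by linarith)]
  linarith

lemma one_le_two_rpow {x : ℝ} (hx : 0 ≤ x) : (1 : ℝ) ≤ 2 ^ x := by
  calc (1:ℝ) = 2 ^ (0:ℝ) := by simp
  _ ≤ 2 ^ x := Real.rpow_le_rpow_of_exponent_le (by norm_num) hx

lemma real_add_rpow_le {x y q : ℝ} (hx : 0 ≤ x) (hy : 0 ≤ y) (hq : 1 ≤ q) :
    (x + y) ^ q ≤ 2 ^ (q - 1) * (x ^ q + y ^ q) := by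
  have h := NNReal.rpow_add_le_mul_rpow_add_rpow x.toNNReal y.toNNReal hq
  have h2 := NNReal.coe_le_coe.2 h
  push_cast at h2
  rwa [Real.coe_toNNReal _ hx, Real.coe_toNNReal _ hy] at h2

lemma endpoint_sub (p : ℝ) (hp : 2 ≤ p) {A B : ℝ} (hA : 0 ≤ A) (hB : 0 ≤ B) :
    |A - B| ^ p ≤ 2 ^ (p - 2) * (A ^ p + B ^ p - (A ^ (p - 2) + B ^ (p - 2)) * (A * B)) := by
  wlog hAB : B ≤ A generalizing A B
  · rw [abs_sub_comm]
    have h := this hB hA (le_of_not_ge hAB)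
    calc |B - A| ^ p ≤ 2 ^ (p - 2) * (B ^ p + A ^ p - (B ^ (p - 2) + A ^ (p - 2)) * (B * A)) := h
    _ = 2 ^ (p - 2) * (A ^ p + B ^ p - (A ^ (p - 2) + B ^ (p - 2)) * (A * B)) := by ring
  rw [abs_of_nonneg (by linarith)]
  have h1 : A ^ (p - 1) * A = A ^ p := rpow_pred_mul_self hA (by linarith)
  have h2 : B ^ (p - 1) * B = B ^ p := rpow_pred_mul_self hB (by linarith)
  have h3 : A ^ (p - 1 - 1) * A = A ^ (p - 1) := rpow_pred_mul_self hA (by linarith)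
  have h4 : B ^ (p - 1 - 1) * B = B ^ (p - 1) := rpow_pred_mul_self hB (by linarith)
  rw [show p - 1 - 1 = p - 2 by ring] at h3 h4
  have key : A ^ p + B ^ p - (A ^ (p - 2) + B ^ (p - 2)) * (A * B)
      = (A ^ (p - 1) - B ^ (p - 1)) * (A - B) := by
    rw [← h1, ← h2, ← h3, ← h4]; ring
  rw [key]
  have hsup : (A - B) ^ (p - 1) ≤ A ^ (p - 1) - B ^ (p - 1) := by
    have h := rpow_superadd (x := A - B) (y := B) (by linarith) hB (by linarith : 1 ≤ p - 1)
    rw [sub_add_cancel] at h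
    linarith
  have hmono : B ^ (p - 1) ≤ A ^ (p - 1) := Real.rpow_le_rpow hB hAB (by linarith)
  calc (A - B) ^ p = (A - B) ^ (p - 1) * (A - B) :=
        (rpow_pred_mul_self (by linarith) (by linarith)).symm
  _ ≤ (A ^ (p - 1) - B ^ (p - 1)) * (A - B) :=
        mul_le_mul_of_nonneg_right hsup (by linarith)
  _ ≤ 2 ^ (p - 2) * ((A ^ (p - 1) - B ^ (p - 1)) * (A - B)) :=
        le_mul_of_one_le_left (mul_nonneg (by linarith) (by linarith))
          (one_le_two_rpow (by linarith))

lemma endpoint_add (p : ℝ) (hp : 2 ≤ p) {A B : ℝ} (hA : 0 ≤ A) (hB : 0 ≤ B) :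
    (A + B) ^ p ≤ 2 ^ (p - 2) * (A ^ p + B ^ p + (A ^ (p - 2) + B ^ (p - 2)) * (A * B)) := by
  have h1 : A ^ (p - 1) * A = A ^ p := rpow_pred_mul_self hA (by linarith)
  have h2 : B ^ (p - 1) * B = B ^ p := rpow_pred_mul_self hB (by linarith)
  have h3 : A ^ (p - 1 - 1) * A = A ^ (p - 1) := rpow_pred_mul_self hA (by linarith)
  have h4 : B ^ (p - 1 - 1) * B = B ^ (p - 1) := rpow_pred_mul_self hB (by linarith)
  rw [show p - 1 - 1 = p - 2 by ring] at h3 h4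
  have key : A ^ p + B ^ p + (A ^ (p - 2) + B ^ (p - 2)) * (A * B)
      = (A ^ (p - 1) + B ^ (p - 1)) * (A + B) := by
    rw [← h1, ← h2, ← h3, ← h4]; ring
  rw [key]
  have hmean : (A + B) ^ (p - 1) ≤ 2 ^ (p - 2) * (A ^ (p - 1) + B ^ (p - 1)) := by
    have h := real_add_rpow_le hA hB (by linarith : 1 ≤ p - 1)
    rw [show p - 1 - 1 = p - 2 by ring] at h
    exact h
  calc (A + B) ^ p = (A + B) ^ (p - 1) * (A + B) :=
        (rpow_pred_mul_self (by linarith) (by linarith)).symm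
  _ ≤ (2 ^ (p - 2) * (A ^ (p - 1) + B ^ (p - 1))) * (A + B) :=
        mul_le_mul_of_nonneg_right hmean (by linarith)
  _ = 2 ^ (p - 2) * ((A ^ (p - 1) + B ^ (p - 1)) * (A + B)) := by ring

lemma key_ineq (p : ℝ) (hp : 2 ≤ p) {A B r : ℝ} (hA : 0 ≤ A) (hB : 0 ≤ B)
    (hr : |r| ≤ A * B) :
    (A ^ (2:ℕ) + B ^ (2:ℕ) - 2 * r) ^ (p / 2) ≤
      2 ^ (p - 2) * (A ^ p + B ^ p - (A ^ (p - 2) + B ^ (p - 2)) * r) := by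
  have hrle : r ≤ A * B := (le_abs_self r).trans hr
  have hrge : -(A * B) ≤ r := by have := (neg_abs_le r); linarith [neg_le_neg hr]
  have hsub : ((A - B) ^ (2:ℕ)) ^ (p / 2) = |A - B| ^ p := by
    rw [← sq_abs, ← Real.rpow_natCast |A - B| 2, ← Real.rpow_mul (abs_nonneg _)]
    congr 1
    push_cast
    ring
  have hadd : ((A + B) ^ (2:ℕ)) ^ (p / 2) = (A + B) ^ p := by
    rw [← Real.rpow_natCast (A + B) 2, ← Real.rpow_mul (by linarith)]
    congr 1
    push_cast
    ring
  have e1 : ((A + B) ^ (2:ℕ)) ^ (p / 2) ≤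
      2 ^ (p - 2) * (A ^ p + B ^ p + (A ^ (p - 2) + B ^ (p - 2)) * (A * B)) := by
    rw [hadd]; exact endpoint_add p hp hA hB
  have e2 : ((A - B) ^ (2:ℕ)) ^ (p / 2) ≤
      2 ^ (p - 2) * (A ^ p + B ^ p - (A ^ (p - 2) + B ^ (p - 2)) * (A * B)) := by
    rw [hsub]; exact endpoint_sub p hp hA hB
  rcases eq_or_lt_of_le (le_trans (abs_nonneg r) hr) with h0 | hABpos
  · -- A * B = 0, hence r = 0
    have hAB0 : A * B = 0 := h0.symm
    have hr0 : r = 0 := by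
      have : |r| ≤ 0 := by rw [hAB0] at hr; exact hr
      exact abs_eq_zero.1 (le_antisymm this (abs_nonneg r))
    subst hr0
    have hsq : A ^ (2:ℕ) + B ^ (2:ℕ) - 2 * 0 = (A - B) ^ (2:ℕ) := by
      have : A * B = 0 := hAB0
      nlinarith [this]
    rw [hsq]
    calc ((A - B) ^ (2:ℕ)) ^ (p / 2)
        ≤ 2 ^ (p - 2) * (A ^ p + B ^ p - (A ^ (p - 2) + B ^ (p - 2)) * (A * B)) := e2
    _ = 2 ^ (p - 2) * (A ^ p + B ^ p - (A ^ (p - 2) + B ^ (p - 2)) * 0) := by rw [hAB0]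
  · set t : ℝ := (A * B + r) / (2 * (A * B)) with ht_def
    have hABne : (A * B) ≠ 0 := hABpos.ne'
    have ht0 : 0 ≤ t := div_nonneg (by linarith) (by linarith)
    have ht1 : t ≤ 1 := by
      rw [div_le_one (by linarith)]; linarith
    have hcomb : A ^ (2:ℕ) + B ^ (2:ℕ) - 2 * r
        = (1 - t) * (A + B) ^ (2:ℕ) + t * (A - B) ^ (2:ℕ) := by
      field_simp [ht_def]
      have key : t * (2 * (A * B)) = A * B + r := by rw [ht_def]; field_simp; exact mul_div_cancel_left₀ _ hABne
      linear_combination 2 * key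
    have hmemx : ((A + B) ^ (2:ℕ) : ℝ) ∈ Set.Ici (0:ℝ) := Set.mem_Ici.2 (by positivity)
    have hmemy : ((A - B) ^ (2:ℕ) : ℝ) ∈ Set.Ici (0:ℝ) := Set.mem_Ici.2 (by positivity)
    have conv := (convexOn_rpow (by linarith : 1 ≤ p / 2)).2 hmemx hmemy
      (by linarith : (0:ℝ) ≤ 1 - t) ht0 (by ring)
    simp only [smul_eq_mul] at conv
    have hident : (1 - 2 * t) * (A * B) = -r := by
      field_simp [ht_def]
      have key : t * (2 * (A * B)) = A * B + r := by rw [ht_def]; field_simp; exact mul_div_cancel_left₀ _ hABne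
      linear_combination (-1) * key
    have final :
        (1 - t) * (2 ^ (p - 2) * (A ^ p + B ^ p + (A ^ (p - 2) + B ^ (p - 2)) * (A * B)))
        + t * (2 ^ (p - 2) * (A ^ p + B ^ p - (A ^ (p - 2) + B ^ (p - 2)) * (A * B)))
        = 2 ^ (p - 2) * (A ^ p + B ^ p - (A ^ (p - 2) + B ^ (p - 2)) * r) := by
      linear_combination (2 ^ (p - 2) * (A ^ (p - 2) + B ^ (p - 2))) * hident
    calc (A ^ (2:ℕ) + B ^ (2:ℕ) - 2 * r) ^ (p / 2)
        = ((1 - t) * (A + B) ^ (2:ℕ) + t * (A - B) ^ (2:ℕ)) ^ (p / 2) := by rw [hcomb]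
    _ ≤ (1 - t) * ((A + B) ^ (2:ℕ)) ^ (p / 2) + t * ((A - B) ^ (2:ℕ)) ^ (p / 2) := conv
    _ ≤ (1 - t) * (2 ^ (p - 2) * (A ^ p + B ^ p + (A ^ (p - 2) + B ^ (p - 2)) * (A * B)))
        + t * (2 ^ (p - 2) * (A ^ p + B ^ p - (A ^ (p - 2) + B ^ (p - 2)) * (A * B))) := by
          gcongr
    _ = 2 ^ (p - 2) * (A ^ p + B ^ p - (A ^ (p - 2) + B ^ (p - 2)) * r) := final

theorem simon_ge_two (p : ℝ) (hp : 2 ≤ p) (a b : ℂ) :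
    ‖b - a‖ ^ p ≤
      2 ^ (p - 2) *
        (((‖b‖ ^ (p - 2) : ℝ) * b - (‖a‖ ^ (p - 2) : ℝ) * a) *
            (starRingEnd ℂ) (b - a)).re := by
  set A : ℝ := ‖a‖ with hA_def
  set B : ℝ := ‖b‖ with hB_def
  have hA : 0 ≤ A := norm_nonneg a
  have hB : 0 ≤ B := norm_nonneg b
  set r : ℝ := b.re * a.re + b.im * a.im with hr_def
  have hpne : p ≠ 0 := by linarith
  have ha2 : A ^ (p - 2) * (a.re * a.re + a.im * a.im) = A ^ p := by
    have h := rpow_sub_two_mul_sq hA hpne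
    rwa [Complex.sq_norm, Complex.normSq_apply] at h
  have hb2 : B ^ (p - 2) * (b.re * b.re + b.im * b.im) = B ^ p := by
    have h := rpow_sub_two_mul_sq hB hpne
    rwa [Complex.sq_norm, Complex.normSq_apply] at h
  have hre : (((B ^ (p - 2) : ℝ) * b - (A ^ (p - 2) : ℝ) * a) * (starRingEnd ℂ) (b - a)).re
      = A ^ p + B ^ p - (A ^ (p - 2) + B ^ (p - 2)) * r := by
    simp only [Complex.mul_re, Complex.sub_re, Complex.sub_im, Complex.conj_re, Complex.conj_im,
      Complex.ofReal_re, Complex.ofReal_im, Complex.mul_im]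
    rw [← ha2, ← hb2, hr_def]
    ring
  have hrabs : |r| ≤ A * B := by
    have h := Complex.abs_re_le_norm (b * (starRingEnd ℂ) a)
    rw [norm_mul, Complex.norm_conj] at h
    have hre2 : (b * (starRingEnd ℂ) a).re = r := by
      simp [Complex.mul_re, hr_def]
    rw [hre2] at h
    calc |r| ≤ B * A := h
    _ = A * B := mul_comm _ _
  have habs2 : (‖b - a‖) ^ (2:ℕ) = A ^ (2:ℕ) + B ^ (2:ℕ) - 2 * r := by
    have h1 : A ^ (2:ℕ) = a.re * a.re + a.im * a.im := by
      rw [hA_def, Complex.sq_norm, Complex.normSq_apply]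
    have h2 : B ^ (2:ℕ) = b.re * b.re + b.im * b.im := by
      rw [hB_def, Complex.sq_norm, Complex.normSq_apply]
    rw [Complex.sq_norm, Complex.normSq_apply, h1, h2, hr_def]
    simp only [Complex.sub_re, Complex.sub_im]
    ring
  have hLHS : ‖b - a‖ ^ p = ((‖b - a‖) ^ (2:ℕ)) ^ (p / 2) := by
    rw [← Real.rpow_natCast (‖b - a‖) 2, ← Real.rpow_mul (norm_nonneg _)]
    congr 1
    push_cast
    ring
  rw [hre, hLHS, habs2]
  exact key_ineq p hp hA hB hrabs
end

section
/- For all complex numbers a, b with a ≠ b and all real p > 1, one has Re((|b|^{p-2}b − |a|^{p-2}a)·conj(b−a)) > 0. -/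
/-!
Write `r = ‖a‖`, `s = ‖b‖`. Expanding the inner product and using Cauchy–Schwarz `⟪b, a⟫ ≤ s r`,
`⟪‖b‖^(p-2) • b - ‖a‖^(p-2) • a, b - a⟫ ≥ (s - r) (s^(p-1) - r^(p-1))`, which is positive when
`r ≠ s` because `x ↦ x^(p-1)` is strictly increasing. When `r = s` the inner product is exactly
`s^(p-2) ‖b - a‖²`, positive since `a ≠ b` forces `s > 0`.
-/

open RealInnerProductSpace

lemma sub_mul_rpow_sub_rpow_pos {r s q : ℝ} (hr : 0 ≤ r) (hs : 0 ≤ s) (hq : 0 < q)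
    (hrs : r ≠ s) : 0 < (s - r) * (s ^ q - r ^ q) := by
  rcases hrs.lt_or_gt with h | h
  · exact mul_pos (sub_pos.2 h) (sub_pos.2 (Real.rpow_lt_rpow hr h hq))
  · exact mul_pos_of_neg_of_neg (sub_neg.2 h) (sub_neg.2 (Real.rpow_lt_rpow hs h hq))

section InnerProductSpace

variable {E : Type*} [NormedAddCommGroup E] [InnerProductSpace ℝ E]

lemma real_inner_smul_sub_smul_sub (a b : E) (α β : ℝ) :
    ⟪β • b - α • a, b - a⟫ = β * ‖b‖ ^ 2 + α * ‖a‖ ^ 2 - (α + β) * ⟪b, a⟫ := by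
  simp only [inner_sub_left, inner_sub_right, real_inner_smul_left, real_inner_self_eq_norm_sq,
    real_inner_comm a b]
  ring

theorem real_inner_rpow_smul_sub_pos {p : ℝ} (hp : 1 < p) {a b : E} (hab : a ≠ b) :
    0 < ⟪‖b‖ ^ (p - 2) • b - ‖a‖ ^ (p - 2) • a, b - a⟫ := by
  have hexpand := norm_sub_sq_real b a
  have hcs : ⟪b, a⟫ ≤ ‖b‖ * ‖a‖ := real_inner_le_norm b a
  rw [real_inner_smul_sub_smul_sub]
  set r := ‖a‖
  set s := ‖b‖
  rcases eq_or_ne r s with hrs | hrs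
  · have hs : 0 < s := by
      refine (norm_nonneg b).lt_of_ne' fun hb0 => hab ?_
      rw [norm_eq_zero.1 hb0, ← norm_eq_zero]
      exact hrs.trans hb0
    have hdist : 0 < ‖b - a‖ ^ 2 := pow_pos (norm_pos_iff.2 (sub_ne_zero.2 hab.symm)) 2
    rw [hrs] at hexpand ⊢
    nlinarith [mul_pos (Real.rpow_pos_of_pos hs (p - 2)) hdist]
  · have rpow_mul_self (x : ℝ) (hx : 0 ≤ x) : x ^ (p - 2) * x = x ^ (p - 1) := by
      rw [← Real.rpow_add_one' hx (by linarith)]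
      ring_nf
    have hc : 0 ≤ r ^ (p - 2) + s ^ (p - 2) := by positivity
    have hmono := sub_mul_rpow_sub_rpow_pos (norm_nonneg a) (norm_nonneg b)
      (by linarith : 0 < p - 1) hrs
    rw [← rpow_mul_self s (norm_nonneg b), ← rpow_mul_self r (norm_nonneg a)] at hmono
    nlinarith [mul_le_mul_of_nonneg_left hcs hc]

end InnerProductSpace

theorem re_pos (p : ℝ) (hp : 1 < p) (a b : ℂ) (hab : a ≠ b) :
    0 < (((‖b‖ ^ (p - 2) : ℝ) * b - (‖a‖ ^ (p - 2) : ℝ) * a) *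
        (starRingEnd ℂ) (b - a)).re := by
  simpa only [Complex.real_smul, Complex.inner, real_inner_comm (b - a)] using
    real_inner_rpow_smul_sub_pos hp hab
end

section
/- Let 1 < p < 2 be real and a, b ∈ ℂ with a + t(b−a) ≠ 0 for all t ∈ [0,1]. Then Re((|b|^{p-2}b − |a|^{p-2}a)·conj(b−a)) ≥ (p−1)·|b−a|²·∫₀¹ |a + t(b−a)|^{p-2} dt. -/
open Set

theorem re_ge_integral (p : ℝ) (hp1 : 1 < p) (hp2 : p < 2) (a b : ℂ)
    (h : ∀ t ∈ Set.Icc (0 : ℝ) 1, a + (t : ℂ) * (b - a) ≠ 0) :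
    (((‖b‖ ^ (p - 2) : ℝ) * b - (‖a‖ ^ (p - 2) : ℝ) * a) *
        (starRingEnd ℂ) (b - a)).re ≥
      (p - 1) * ‖b - a‖ ^ 2 *
        ∫ t in (0 : ℝ)..1, ‖a + (t : ℂ) * (b - a)‖ ^ (p - 2) := by
  set c : ℂ := b - a with hc
  set q : ℝ := (p - 2) / 2 with hq
  set B : ℝ := a.re * c.re + a.im * c.im with hB
  set C : ℝ := c.re ^ 2 + c.im ^ 2 with hC
  set P : ℝ → ℝ := fun t => (a.re + t * c.re) ^ 2 + (a.im + t * c.im) ^ 2 with hP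
  have hb : b = a + c := by rw [hc]; ring
  have hPnormSq : ∀ t : ℝ, P t = Complex.normSq (a + (t : ℂ) * c) := by
    intro t
    simp only [Complex.normSq_apply, Complex.add_re, Complex.add_im, Complex.mul_re,
      Complex.mul_im, Complex.ofReal_re, Complex.ofReal_im, hP]
    ring
  have hPpos : ∀ t ∈ Icc (0:ℝ) 1, 0 < P t := by
    intro t ht
    rw [hPnormSq t]
    exact Complex.normSq_pos.2 (h t ht)
  have habsq : ∀ z : ℂ, ‖z‖ ^ (p - 2) = Complex.normSq z ^ q := by
    intro z
    rw [Complex.norm_def, Real.sqrt_eq_rpow, ← Real.rpow_mul (Complex.normSq_nonneg z)]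
    congr 1
    rw [hq]; ring
  have hq2 : 2 * q + 1 = p - 1 := by rw [hq]; ring
  have hqneg : q < 0 := by rw [hq]; linarith
  -- derivative of P
  have hPd : ∀ t : ℝ, HasDerivAt P (2 * B + 2 * C * t) t := by
    intro t
    have h1 : HasDerivAt (fun t : ℝ => a.re + t * c.re) c.re t := by
      simpa using ((hasDerivAt_id t).mul_const c.re).const_add a.re
    have h2 : HasDerivAt (fun t : ℝ => a.im + t * c.im) c.im t := by
      simpa using ((hasDerivAt_id t).mul_const c.im).const_add a.im
    have := (h1.pow 2).add (h2.pow 2)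
    refine this.congr_deriv ?_
    simp only [hB, hC]
    ring
  set f : ℝ → ℝ := fun t => P t ^ q * (B + C * t) with hf
  set D : ℝ → ℝ := fun t =>
    q * P t ^ (q - 1) * (2 * B + 2 * C * t) * (B + C * t) + P t ^ q * C with hD
  have hfd : ∀ t ∈ Icc (0:ℝ) 1, HasDerivAt f (D t) t := by
    intro t ht
    have h1 : HasDerivAt (fun t : ℝ => P t ^ q)
        (q * P t ^ (q - 1) * (2 * B + 2 * C * t)) t := by
      have := (hPd t).rpow_const (p := q) (Or.inl (hPpos t ht).ne')
      convert this using 1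
      ring
    have h2 : HasDerivAt (fun t : ℝ => B + C * t) C t := by
      simpa using ((hasDerivAt_id t).const_mul C).const_add B
    exact h1.mul h2
  -- continuity / integrability
  have hPc : Continuous P := by fun_prop
  have hPqc : ∀ r : ℝ, ContinuousOn (fun t => P t ^ r) (Icc (0:ℝ) 1) := by
    intro r
    exact hPc.continuousOn.rpow_const (fun t ht => Or.inl (hPpos t ht).ne')
  have hDc : ContinuousOn D (Icc (0:ℝ) 1) := by
    apply ContinuousOn.add
    · exact ((continuousOn_const.mul (hPqc (q-1))).mul (by fun_prop)).mul (by fun_prop)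
    · exact (hPqc q).mul continuousOn_const
  have hDi : IntervalIntegrable D MeasureTheory.volume 0 1 := by
    apply ContinuousOn.intervalIntegrable
    rwa [uIcc_of_le zero_le_one]
  have hGi : IntervalIntegrable (fun t => (p - 1) * C * P t ^ q)
      MeasureTheory.volume 0 1 := by
    apply ContinuousOn.intervalIntegrable
    rw [uIcc_of_le zero_le_one]
    exact continuousOn_const.mul (hPqc q)
  -- FTC
  have hFTC : ∫ t in (0:ℝ)..1, D t = f 1 - f 0 := by
    apply intervalIntegral.integral_eq_sub_of_hasDerivAt
    · intro t ht
      rw [uIcc_of_le zero_le_one] at ht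
      exact hfd t ht
    · exact hDi
  -- pointwise inequality
  have hpt : ∀ t ∈ Icc (0:ℝ) 1, (p - 1) * C * P t ^ q ≤ D t := by
    intro t ht
    have hP0 : 0 < P t := hPpos t ht
    have hCS : (B + C * t) ^ 2 ≤ P t * C := by
      simp only [hB, hC, hP]
      nlinarith [sq_nonneg ((a.re + t * c.re) * c.im - (a.im + t * c.im) * c.re)]
    have hpow : P t ^ (q - 1) * P t = P t ^ q := by
      rw [← Real.rpow_add_one hP0.ne' (q - 1)]
      ring_nf
    have hpw : 0 < P t ^ (q - 1) := Real.rpow_pos_of_pos hP0 _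
    have key : 2 * q * P t ^ (q - 1) * (P t * C) ≤ 2 * q * P t ^ (q - 1) * (B + C * t) ^ 2 := by
      apply mul_le_mul_of_nonpos_left hCS
      nlinarith
    have hrw : 2 * q * P t ^ (q - 1) * (P t * C) = 2 * q * C * P t ^ q := by
      rw [← hpow]; ring
    have hDval : D t = 2 * q * P t ^ (q - 1) * (B + C * t) ^ 2 + P t ^ q * C := by
      rw [hD]; ring
    have hsplit : (p - 1) * C * P t ^ q = 2 * q * C * P t ^ q + C * P t ^ q := by
      rw [← hq2]; ring
    linarith [key, hrw, hDval, hsplit]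
  -- rewrite RHS integral
  have hRI : (∫ t in (0:ℝ)..1, ‖a + (t : ℂ) * c‖ ^ (p - 2))
      = ∫ t in (0:ℝ)..1, P t ^ q := by
    apply intervalIntegral.integral_congr
    intro t _
    show ‖a + (t : ℂ) * c‖ ^ (p - 2) = P t ^ q
    rw [habsq, hPnormSq]
  have hCabs : ‖c‖ ^ 2 = C := by
    rw [Complex.sq_norm, Complex.normSq_apply, hC]; ring
  -- rewrite LHS
  have hX : ‖b‖ ^ (p - 2) = P 1 ^ q := by
    rw [habsq b]
    congr 1
    rw [hPnormSq 1, hb]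
    norm_num
  have hY : ‖a‖ ^ (p - 2) = P 0 ^ q := by
    rw [habsq a]
    congr 1
    rw [hPnormSq 0]
    norm_num
  have hLHS : (((‖b‖ ^ (p - 2) : ℝ) * b - (‖a‖ ^ (p - 2) : ℝ) * a) *
      (starRingEnd ℂ) c).re = f 1 - f 0 := by
    rw [hX, hY, hb]
    simp only [hf, Complex.mul_re, Complex.sub_re, Complex.sub_im, Complex.add_re,
      Complex.add_im, Complex.mul_im, Complex.ofReal_re, Complex.ofReal_im,
      Complex.conj_re, Complex.conj_im, hB, hC]
    ring
  rw [hLHS, hCabs, hRI, ← hFTC, ge_iff_le, ← intervalIntegral.integral_const_mul]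
  exact intervalIntegral.integral_mono_on zero_le_one hGi hDi hpt
end

section
/- For all complex numbers a, b and all real p ≥ 2 such that a + t(b−a) ≠ 0 for all t ∈ [0,1], one has | |b|^{p-2}b − |a|^{p-2}a | ≤ (p−1)·(|a|^{(p−2)/2} + |b|^{(p−2)/2})·|b−a|·∫₀¹ |a + t(b−a)|^{(p−2)/2} dt. -/
open Complex intervalIntegral Set

set_option maxHeartbeats 1000000

theorem abs_diff_le_integral (p : ℝ) (hp : 2 ≤ p) (a b : ℂ)
    (h : ∀ t ∈ Set.Icc (0 : ℝ) 1, a + (t : ℂ) * (b - a) ≠ 0) :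
    ‖(‖b‖ ^ (p - 2) : ℝ) * b - (‖a‖ ^ (p - 2) : ℝ) * a‖ ≤
      (p - 1) * (‖a‖ ^ ((p - 2) / 2) + ‖b‖ ^ ((p - 2) / 2)) *
        ‖b - a‖ *
        ∫ t in (0 : ℝ)..1, ‖a + (t : ℂ) * (b - a)‖ ^ ((p - 2) / 2) := by
  set q : ℝ := (p - 2) / 2 with hqdef
  have hq0 : 0 ≤ q := div_nonneg (by linarith) (by norm_num)
  set d : ℂ := b - a with hddef
  set γ : ℝ → ℂ := fun t => a + (t : ℂ) * d with hγdef
  set n : ℝ → ℝ := fun t => Complex.normSq (γ t) with hndef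
  set r : ℝ → ℝ := fun t => ‖γ t‖ with hrdef
  have hγcont : Continuous γ := by fun_prop
  have hγd : ∀ t : ℝ, HasDerivAt γ d t := by
    intro t
    have : HasDerivAt (fun t : ℝ => (t : ℂ)) 1 t := Complex.ofRealCLM.hasDerivAt
    have h2 : HasDerivAt (fun x : ℝ => (x:ℂ) * d) d t := by simpa using this.mul_const d
    exact h2.const_add a
  have hrpos : ∀ t ∈ Icc (0:ℝ) 1, 0 < r t := fun t ht => norm_pos_iff.mpr (h t ht)
  have hnr : ∀ t, n t = r t ^ (2:ℕ) := fun t => (Complex.sq_norm (γ t)).symm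
  have hnpos : ∀ t ∈ Icc (0:ℝ) 1, 0 < n t := fun t ht => by
    rw [hnr]; exact pow_pos (hrpos t ht) 2
  have hncont : Continuous n := Complex.continuous_normSq.comp hγcont
  -- derivative of n
  set n' : ℝ → ℝ := fun t => 2 * ((starRingEnd ℂ) (γ t) * d).re with hn'def
  have hn : ∀ t : ℝ, HasDerivAt n (n' t) t := by
    intro t
    have h1 : HasDerivAt (fun t : ℝ => (a.re + t * d.re) ^ 2 + (a.im + t * d.im) ^ 2)
        (2 * (a.re + t * d.re) * d.re + 2 * (a.im + t * d.im) * d.im) t := by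
      have hre : HasDerivAt (fun t : ℝ => a.re + t * d.re) d.re t := by
        simpa using ((hasDerivAt_id t).mul_const d.re).const_add a.re
      have him : HasDerivAt (fun t : ℝ => a.im + t * d.im) d.im t := by
        simpa using ((hasDerivAt_id t).mul_const d.im).const_add a.im
      exact ((hre.fun_pow 2).add (him.fun_pow 2)).congr_deriv (by simp only [Nat.cast_ofNat, Nat.reduceSub, pow_one])
    convert h1 using 1
    · funext s
      simp [hndef, hγdef, Complex.normSq_apply]
      ring
    · simp [hn'def, hγdef, Complex.mul_re]
      ring
  -- rpow of n
  have hkey : ∀ z : ℂ, Complex.normSq z ^ q = ‖z‖ ^ (p - 2) := by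
    intro z
    rw [← Complex.sq_norm, ← Real.rpow_natCast (‖z‖) 2,
      ← Real.rpow_mul (norm_nonneg z)]
    norm_num [hqdef]
    ring_nf
  have hnq : ∀ t, n t ^ q = r t ^ (p - 2) := fun t => hkey (γ t)
  set φ : ℝ → ℝ := fun t => n t ^ q with hφdef
  set φ' : ℝ → ℝ := fun t => q * n t ^ (q - 1) * n' t with hφ'def
  have hφ : ∀ t ∈ Icc (0:ℝ) 1, HasDerivAt φ (φ' t) t := fun t ht => by
    have := (hn t).rpow_const (p := q) (Or.inl (hnpos t ht).ne')
    convert this using 1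
    rw [hφ'def]; ring
  set f : ℝ → ℂ := fun t => φ t • γ t with hfdef
  set f' : ℝ → ℂ := fun t => φ' t • γ t + φ t • d with hf'def
  have hf : ∀ t ∈ Icc (0:ℝ) 1, HasDerivAt f (f' t) t := fun t ht => by
    have := (hφ t ht).smul (hγd t)
    exact this.congr_deriv (add_comm _ _)
  -- continuity of f' on the interval
  have hf'cont : ContinuousOn f' (Icc (0:ℝ) 1) := by
    intro t ht
    have h1 : ContinuousAt (fun x : ℝ => x ^ (q - 1)) (n t) :=
      Real.continuousAt_rpow_const _ _ (Or.inl (hnpos t ht).ne')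
    have h2 : ContinuousAt (fun x : ℝ => x ^ q) (n t) :=
      Real.continuousAt_rpow_const _ _ (Or.inl (hnpos t ht).ne')
    have hn'c : Continuous n' := by
      simp only [hn'def]
      fun_prop
    apply ContinuousAt.continuousWithinAt
    exact (((continuousAt_const.mul (h1.comp hncont.continuousAt)).mul
      hn'c.continuousAt).smul hγcont.continuousAt).add
      ((h2.comp hncont.continuousAt).smul continuousAt_const)
  have hint : IntervalIntegrable f' MeasureTheory.volume 0 1 :=
    (hf'cont.mono (by rw [Set.uIcc_of_le (zero_le_one' ℝ)])).intervalIntegrable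
  -- integrability of r^q
  have hrqcont : ContinuousOn (fun t => r t ^ q) (Icc (0:ℝ) 1) := by
    intro t ht
    exact ((Real.continuousAt_rpow_const _ _ (Or.inr hq0)).comp
      (continuous_norm.comp hγcont).continuousAt).continuousWithinAt
  have hrqint : IntervalIntegrable (fun t => r t ^ q) MeasureTheory.volume 0 1 :=
    (hrqcont.mono (by rw [Set.uIcc_of_le (zero_le_one' ℝ)])).intervalIntegrable
  set C : ℝ := (p - 1) * (‖a‖ ^ q + ‖b‖ ^ q) * ‖d‖ with hCdef
  -- the pointwise bound
  have hbound : ∀ t ∈ Icc (0:ℝ) 1, ‖f' t‖ ≤ C * r t ^ q := by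
    intro t ht
    have hr := hrpos t ht
    have hrne : r t ≠ 0 := hr.ne'
    have hrab : r t ≤ max (‖a‖) (‖b‖) := by
      have : γ t = (1 - (t:ℂ)) * a + (t:ℂ) * b := by rw [hγdef]; push_cast [hddef]; ring
      calc r t = ‖(1 - (t:ℂ)) * a + (t:ℂ) * b‖ := by simp only [hrdef, this]
        _ ≤ ‖(1 - (t:ℂ)) * a‖ + ‖(t:ℂ) * b‖ := norm_add_le _ _
        _ = (1 - t) * ‖a‖ + t * ‖b‖ := by
            rw [show (1 - (t:ℂ)) = ((1 - t : ℝ) : ℂ) by push_cast; ring, norm_mul, norm_mul,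
              Complex.norm_real, Real.norm_eq_abs, Complex.norm_real, Real.norm_eq_abs,
              _root_.abs_of_nonneg (by linarith [ht.2] : (0:ℝ) ≤ 1 - t),
              _root_.abs_of_nonneg ht.1]
        _ ≤ (1 - t) * max (‖a‖) (‖b‖) +
              t * max (‖a‖) (‖b‖) :=
            add_le_add (mul_le_mul_of_nonneg_left (le_max_left _ _) (by linarith [ht.2]))
              (mul_le_mul_of_nonneg_left (le_max_right _ _) ht.1)
        _ = max (‖a‖) (‖b‖) := by ring
    have hrq : r t ^ q ≤ ‖a‖ ^ q + ‖b‖ ^ q := by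
      rcases le_total (‖a‖) (‖b‖) with hab | hab
      · calc r t ^ q ≤ ‖b‖ ^ q := by
              apply Real.rpow_le_rpow hr.le _ hq0
              rwa [max_eq_right hab] at hrab
          _ ≤ _ := le_add_of_nonneg_left (Real.rpow_nonneg (norm_nonneg a) q)
      · calc r t ^ q ≤ ‖a‖ ^ q := by
              apply Real.rpow_le_rpow hr.le _ hq0
              rwa [max_eq_left hab] at hrab
          _ ≤ _ := le_add_of_nonneg_right (Real.rpow_nonneg (norm_nonneg b) q)
    have hn'bound : |n' t| ≤ 2 * (r t * ‖d‖) := by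
      rw [hn'def]
      simp only [abs_mul, _root_.abs_two]
      gcongr
      calc |((starRingEnd ℂ) (γ t) * d).re| ≤ ‖(starRingEnd ℂ) (γ t) * d‖ :=
            Complex.abs_re_le_norm _
        _ = r t * ‖d‖ := by rw [norm_mul, Complex.norm_conj]
    have hterm1 : ‖φ' t • γ t‖ ≤ (p - 2) * r t ^ (p - 2) * ‖d‖ := by
      rw [norm_smul]
      have : ‖γ t‖ = r t := rfl
      rw [this, Real.norm_eq_abs, hφ'def]
      have hnq1 : n t ^ (q - 1) = r t ^ (p - 4) := by
        rw [hnr, ← Real.rpow_natCast (r t) 2, ← Real.rpow_mul hr.le]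
        congr 1
        rw [hqdef]; push_cast; ring
      calc |q * n t ^ (q - 1) * n' t| * r t
          = q * n t ^ (q - 1) * |n' t| * r t := by
            rw [abs_mul, _root_.abs_of_nonneg (mul_nonneg hq0 (Real.rpow_nonneg (hnpos t ht).le _))]
        _ ≤ q * (r t ^ (p - 4)) * (2 * (r t * ‖d‖)) * r t := by
            rw [hnq1]; gcongr
        _ = (2 * q) * (r t ^ (p - 4) * r t * r t) * ‖d‖ := by ring
        _ = (p - 2) * r t ^ (p - 2) * ‖d‖ := by
            rw [← Real.rpow_add_one hrne, ← Real.rpow_add_one hrne,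
              show p - 4 + 1 + 1 = p - 2 by ring, hqdef]
            ring
    have hterm2 : ‖φ t • d‖ ≤ r t ^ (p - 2) * ‖d‖ := by
      rw [norm_smul, Real.norm_eq_abs, hφdef, _root_.abs_of_nonneg (Real.rpow_nonneg (hnpos t ht).le _),
        hnq t]
    calc ‖f' t‖ ≤ ‖φ' t • γ t‖ + ‖φ t • d‖ := norm_add_le _ _
      _ ≤ (p - 2) * r t ^ (p - 2) * ‖d‖ + r t ^ (p - 2) * ‖d‖ := by
          exact add_le_add hterm1 hterm2
      _ = (p - 1) * (r t ^ q * r t ^ q) * ‖d‖ := by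
          rw [← Real.rpow_add hr, show q + q = p - 2 by rw [hqdef]; ring]
          ring
      _ ≤ (p - 1) * ((‖a‖ ^ q + ‖b‖ ^ q) * r t ^ q) * ‖d‖ := by
          exact mul_le_mul_of_nonneg_right (mul_le_mul_of_nonneg_left
            (mul_le_mul_of_nonneg_right hrq (Real.rpow_nonneg hr.le q)) (by linarith))
            (norm_nonneg d)
      _ = C * r t ^ q := by rw [hCdef]; ring
  -- FTC
  have hftc : ∫ t in (0:ℝ)..1, f' t = f 1 - f 0 := by
    apply intervalIntegral.integral_eq_sub_of_hasDerivAt _ hint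
    intro t ht
    exact hf t (by rwa [Set.uIcc_of_le (zero_le_one' ℝ)] at ht)
  have hf1 : f 1 = ((‖b‖ ^ (p - 2) : ℝ) : ℂ) * b := by
    have h1 : γ 1 = b := by rw [hγdef]; simp [hddef]
    show (Complex.normSq (γ 1) ^ q) • γ 1 = _
    rw [h1, hkey b, Complex.real_smul]
  have hf0 : f 0 = ((‖a‖ ^ (p - 2) : ℝ) : ℂ) * a := by
    have h0 : γ 0 = a := by rw [hγdef]; simp
    show (Complex.normSq (γ 0) ^ q) • γ 0 = _
    rw [h0, hkey a, Complex.real_smul]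
  have hC0 : 0 ≤ C := by
    rw [hCdef]
    have := norm_nonneg d
    have := Real.rpow_nonneg (norm_nonneg a) q
    have := Real.rpow_nonneg (norm_nonneg b) q
    have : (0:ℝ) ≤ p - 1 := by linarith
    positivity
  calc ‖(‖b‖ ^ (p - 2) : ℝ) * b - (‖a‖ ^ (p - 2) : ℝ) * a‖
      = ‖f 1 - f 0‖ := by rw [hf1, hf0]
    _ = ‖∫ t in (0:ℝ)..1, f' t‖ := by rw [hftc]
    _ ≤ ∫ t in (0:ℝ)..1, ‖f' t‖ := intervalIntegral.norm_integral_le_integral_norm zero_le_one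
    _ ≤ ∫ t in (0:ℝ)..1, C * r t ^ q := by
        apply intervalIntegral.integral_mono_on zero_le_one hint.norm (hrqint.const_mul C)
        exact hbound
    _ = C * ∫ t in (0:ℝ)..1, r t ^ q := intervalIntegral.integral_const_mul _ _
    _ = (p - 1) * (‖a‖ ^ q + ‖b‖ ^ q) * ‖d‖ *
          ∫ t in (0:ℝ)..1, r t ^ q := by rw [hCdef]
end

section
/- For all complex numbers a, b and all real p ≥ 2 with a + t(b−a) ≠ 0 for all t ∈ [0,1], one has | |b|^{p-2}b − |a|^{p-2}a | ≤ (p−1)·(|a|^{(p−2)/2} + |b|^{(p−2)/2})·| |b|^{(p−2)/2}b − |a|^{(p−2)/2}a |. -/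
/-!
Write `V z = |z|^{(p-2)/2} z` and `s = (p-2)/p`. Then `|z|^{p-2} z = |V z|^s V z` and
`|V z|^s = |z|^{(p-2)/2}`, so the claim is the bound
`| |B|^s B - |A|^s A | ≤ (1+s) (|A|^s + |B|^s) |B - A|` for `A = V a`, `B = V b`,
together with `1 + s ≤ p - 1`. That bound follows, when `|A| ≤ |B|`, from splitting
`|B|^s B - |A|^s A = |B|^s (B - A) + (|B|^s - |A|^s) A` and the weighted AM-GM inequality
`(1+s) |A| |B|^s ≤ |A|^{1+s} + s |B|^{1+s}`.
-/

open Real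

lemma rpow_sub_rpow_mul_le {s α β : ℝ} (hs : 0 ≤ s) (hα : 0 ≤ α) (hβ : 0 ≤ β) :
    (β ^ s - α ^ s) * α ≤ s * β ^ s * (β - α) := by
  have h1s : 0 < s + 1 := by linarith
  have amgm := geom_mean_le_arith_mean2_weighted (w₁ := 1 / (s + 1)) (w₂ := s / (s + 1))
    (p₁ := α ^ (s + 1)) (p₂ := β ^ (s + 1)) (by positivity) (by positivity) (by positivity)
    (by positivity) (by field_simp; ring)
  rw [← rpow_mul hα, ← rpow_mul hβ, mul_one_div_cancel h1s.ne', rpow_one,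
    mul_div_cancel₀ s h1s.ne', rpow_add_one' hα h1s.ne', rpow_add_one' hβ h1s.ne'] at amgm
  have key : (s + 1) * (α * β ^ s) ≤ α ^ s * α + s * (β ^ s * β) := by
    calc (s + 1) * (α * β ^ s)
        ≤ (s + 1) * (1 / (s + 1) * (α ^ s * α) + s / (s + 1) * (β ^ s * β)) := by gcongr
      _ = α ^ s * α + s * (β ^ s * β) := by field_simp
  linarith

section NormedSpace

variable {E : Type*} [NormedAddCommGroup E] [NormedSpace ℝ E]

lemma norm_rpow_smul_self {t : ℝ} (ht : t + 1 ≠ 0) (x : E) :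
    ‖‖x‖ ^ t • x‖ = ‖x‖ ^ (t + 1) := by
  rw [norm_smul_of_nonneg (by positivity), rpow_add_one' (norm_nonneg x) ht]

lemma norm_rpow_smul_sub_rpow_smul_le_of_norm_le {s : ℝ} (hs : 0 ≤ s) {x y : E}
    (hxy : ‖x‖ ≤ ‖y‖) :
    ‖‖y‖ ^ s • y - ‖x‖ ^ s • x‖ ≤ (1 + s) * ‖y‖ ^ s * ‖y - x‖ := by
  have hpow : ‖x‖ ^ s ≤ ‖y‖ ^ s := rpow_le_rpow (norm_nonneg x) hxy hs
  have hsplit : ‖y‖ ^ s • y - ‖x‖ ^ s • x = ‖y‖ ^ s • (y - x) + (‖y‖ ^ s - ‖x‖ ^ s) • x := by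
    rw [smul_sub, sub_smul]; abel
  have hyoung := rpow_sub_rpow_mul_le hs (norm_nonneg x) (norm_nonneg y)
  have hnorms : ‖y‖ - ‖x‖ ≤ ‖y - x‖ := norm_sub_norm_le y x
  calc ‖‖y‖ ^ s • y - ‖x‖ ^ s • x‖
      ≤ ‖y‖ ^ s * ‖y - x‖ + (‖y‖ ^ s - ‖x‖ ^ s) * ‖x‖ := by
        rw [hsplit, ← norm_smul_of_nonneg (by positivity),
          ← norm_smul_of_nonneg (sub_nonneg.mpr hpow)]
        exact norm_add_le _ _
    _ ≤ ‖y‖ ^ s * ‖y - x‖ + s * ‖y‖ ^ s * ‖y - x‖ := by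
        gcongr ‖y‖ ^ s * ‖y - x‖ + ?_
        exact hyoung.trans (by gcongr)
    _ = (1 + s) * ‖y‖ ^ s * ‖y - x‖ := by ring

lemma norm_rpow_smul_sub_rpow_smul_le {s : ℝ} (hs : 0 ≤ s) (x y : E) :
    ‖‖y‖ ^ s • y - ‖x‖ ^ s • x‖ ≤ (1 + s) * (‖x‖ ^ s + ‖y‖ ^ s) * ‖y - x‖ := by
  have hx : 0 ≤ ‖x‖ ^ s := by positivity
  have hy : 0 ≤ ‖y‖ ^ s := by positivity
  rcases le_total ‖x‖ ‖y‖ with hxy | hyx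
  · calc _ ≤ (1 + s) * ‖y‖ ^ s * ‖y - x‖ := norm_rpow_smul_sub_rpow_smul_le_of_norm_le hs hxy
      _ ≤ _ := by gcongr; linarith
  · calc _ = ‖‖x‖ ^ s • x - ‖y‖ ^ s • y‖ := norm_sub_rev _ _
      _ ≤ (1 + s) * ‖x‖ ^ s * ‖x - y‖ := norm_rpow_smul_sub_rpow_smul_le_of_norm_le hs hyx
      _ ≤ _ := by rw [norm_sub_rev]; gcongr; linarith

end NormedSpace

theorem lindqvist_VI_general (p : ℝ) (hp : 2 ≤ p) (a b : ℂ) :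
    ‖(‖b‖ ^ (p - 2) : ℝ) * b - (‖a‖ ^ (p - 2) : ℝ) * a‖ ≤
      (p - 1) * (‖a‖ ^ ((p - 2) / 2) + ‖b‖ ^ ((p - 2) / 2)) *
        ‖(‖b‖ ^ ((p - 2) / 2) : ℝ) * b -
          (‖a‖ ^ ((p - 2) / 2) : ℝ) * a‖ := by
  have hp0 : 0 < p := by linarith
  set t := (p - 2) / 2
  set s := (p - 2) / p
  have hs : 0 ≤ s := div_nonneg (by linarith) hp0.le
  have hnorm (z : ℂ) : ‖‖z‖ ^ t • z‖ ^ s = ‖z‖ ^ t := by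
    rw [norm_rpow_smul_self (by positivity), ← rpow_mul (norm_nonneg z)]
    congr 1
    simp only [s, t]
    field_simp
    ring
  have hcomp (z : ℂ) : ‖z‖ ^ (p - 2) • z = ‖‖z‖ ^ t • z‖ ^ s • ‖z‖ ^ t • z := by
    rw [hnorm, smul_smul, ← sq, ← rpow_mul_natCast (norm_nonneg z)]
    congr 2
    ring
  have hexp : 1 + s ≤ p - 1 := by
    have hdiff : p - 1 - (1 + s) = (p - 1) * (p - 2) / p := by
      simp only [s]
      field_simp
      ring
    rw [← sub_nonneg, hdiff]
    exact div_nonneg (mul_nonneg (by linarith) (by linarith)) hp0.le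
  simp only [← Complex.real_smul, hcomp]
  calc _ ≤ (1 + s) * (‖‖a‖ ^ t • a‖ ^ s + ‖‖b‖ ^ t • b‖ ^ s) * ‖‖b‖ ^ t • b - ‖a‖ ^ t • a‖ :=
        norm_rpow_smul_sub_rpow_smul_le hs _ _
    _ ≤ _ := by rw [hnorm, hnorm]; gcongr

theorem lindqvist_VI (p : ℝ) (hp : 2 ≤ p) (a b : ℂ)
    (h : ∀ t ∈ Set.Icc (0 : ℝ) 1, a + (t : ℂ) * (b - a) ≠ 0) :
    ‖(‖b‖ ^ (p - 2) : ℝ) * b - (‖a‖ ^ (p - 2) : ℝ) * a‖ ≤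
      (p - 1) * (‖a‖ ^ ((p - 2) / 2) + ‖b‖ ^ ((p - 2) / 2)) *
        ‖(‖b‖ ^ ((p - 2) / 2) : ℝ) * b -
          (‖a‖ ^ ((p - 2) / 2) : ℝ) * a‖ :=
  lindqvist_VI_general p hp a b
end
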